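/- arXiv:1809.10625 — 4 statements merged into one kernel-verified Lean document; each statement's English description precedes it below -/
import Mathlib

section
/- Let p be a prime number and let K = 𝔽_p((t)) be the field of formal Laurent series over the field with p elements (in Lean: LaurentSeries (ZMod p)). Let m be a positive integer not divisible by p, and let a = t^{-m} (the Laurent series single (-m) 1). Then there is no f ∈ K with f^p - f = a; that is, a does not lie in the image of the Artin–Schreier map ℘(x) = x^p - x on K. -/
/-!
With respect to the valuation `v = ord_t`, the Artin–Schreier map `x ↦ x ^ p - x` sends elements
of non-negative valuation to elements of non-negative valuation, and multiplies a negative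
valuation by `p`. Since `v (t ^ (-m)) = -m < 0`, a solution `f` would satisfy `p • v f = -m`,
contradicting `p ∤ m`.
-/

namespace AddValuation

variable {R Γ : Type*} [Ring R] [AddCommGroup Γ] [LinearOrder Γ] [IsOrderedAddMonoid Γ]
  (v : AddValuation R (WithTop Γ)) {x : R} {n : ℕ}

theorem nonneg_map_pow_sub_self (hx : 0 ≤ v x) : 0 ≤ v (x ^ n - x) :=
  le_trans (le_min (by rw [map_pow]; exact nsmul_nonneg hx n) hx) (v.map_sub _ _)

theorem map_pow_sub_self_of_neg (hn : 1 < n) (hx : v x < 0) : v (x ^ n - x) = n • v x := by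
  obtain ⟨g, hg⟩ := WithTop.ne_top_iff_exists.mp hx.ne_top
  have hg0 : g < 0 := WithTop.coe_lt_coe.mp (hg ▸ hx)
  have hlt : n • g < g := by
    obtain ⟨k, rfl⟩ := Nat.exists_eq_add_of_lt hn
    rw [show 1 + k + 1 = k + 1 + 1 by omega, succ_nsmul, add_lt_iff_neg_right]
    exact nsmul_neg hg0 k.succ_ne_zero
  have hpow : v (x ^ n) < v x := by
    rw [map_pow, ← hg, ← WithTop.coe_nsmul]
    exact WithTop.coe_lt_coe.mpr hlt
  rw [v.map_sub_eq_of_lt_left hpow, map_pow]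

end AddValuation

open HahnSeries

theorem stmt_4 (p : ℕ) (hp : p.Prime) (m : ℕ) (hm : 0 < m) (hpm : ¬ (p ∣ m)) :
    ¬ ∃ f : LaurentSeries (ZMod p),
      f ^ p - f = HahnSeries.single (-(m : ℤ)) (1 : ZMod p) := by
  have : Fact p.Prime := ⟨hp⟩
  rintro ⟨f, hf⟩
  set v := HahnSeries.addVal ℤ (ZMod p)
  have hval : v (f ^ p - f) = ((-m : ℤ) : WithTop ℤ) := by
    rw [hf, addVal_apply, orderTop_single one_ne_zero]
  have hneg : v (f ^ p - f) < 0 := by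
    rw [hval]
    exact WithTop.coe_lt_coe.mpr (by omega)
  have hf_neg : v f < 0 := not_le.mp fun h => (v.nonneg_map_pow_sub_self h).not_gt hneg
  obtain ⟨k, hk⟩ := WithTop.ne_top_iff_exists.mp hf_neg.ne_top
  rw [v.map_pow_sub_self_of_neg hp.one_lt hf_neg, ← hk, ← WithTop.coe_nsmul,
    WithTop.coe_eq_coe, nsmul_eq_mul] at hval
  exact hpm (Int.natCast_dvd_natCast.mp ⟨-k, by linarith⟩)
end

section
/- Let p be a prime number, let K = 𝔽_p((t)) be the field of formal Laurent series over the field with p elements (in Lean: LaurentSeries (ZMod p)), and let m be a positive integer not divisible by p. Then the polynomial X^p - X - t^{-m} (in Lean: X^p - X - C (single (-m) 1) in Polynomial K) is irreducible over K. -/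
/-!
If `α` is a root of `f = X ^ p - X - a` in an algebraic closure, every other root `r` satisfies
`(r - α) ^ p = r - α`, so `r - α` lies in the prime field. Summing over the roots of the
minimal polynomial `g` of `α`, the coefficient of `X ^ (deg g - 1)` puts `(deg g) • α` in the
base field; if `g ≠ f` then `0 < deg g < p`, so `α` itself would be a solution of
`b ^ p - b = a` in the base field. Over `𝔽_p((t))` there is no such solution for `a = t⁻ᵐ`
with `p ∤ m`: for `ord x < 0` the order of `x ^ p - x` is `p · ord x`, and otherwise it is
nonnegative.
-/

open Polynomial

namespace Polynomial

theorem Splits.mem_of_forall_roots_sub_mem {E : Type*} [Field E] {K : Subfield E} {g : E[X]}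
    (hs : g.Splits) (hm : g.Monic) (hK : g.nextCoeff ∈ K) (hd : (g.natDegree : E) ≠ 0) {α : E}
    (hα : ∀ r ∈ g.roots, r - α ∈ K) : α ∈ K := by
  have hsum : (g.roots.map (· - α)).sum = -g.nextCoeff - g.natDegree * α := by
    rw [Multiset.sum_map_sub, Multiset.map_id', Multiset.map_const', Multiset.sum_replicate,
      hs.nextCoeff_eq_neg_sum_roots_of_monic hm, neg_neg, hs.natDegree_eq_card_roots, nsmul_eq_mul]
  have hdα : (g.natDegree : E) * α ∈ K := by
    rw [show (g.natDegree : E) * α = -g.nextCoeff - (g.roots.map (· - α)).sum by rw [hsum]; ring]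
    refine K.sub_mem (K.neg_mem hK) (K.multiset_sum_mem _ fun _ h ↦ ?_)
    obtain ⟨r, hr, rfl⟩ := Multiset.mem_map.mp h
    exact hα r hr
  simpa [hd] using K.mul_mem (K.inv_mem (natCast_mem K g.natDegree)) hdα

section ArtinSchreier

variable {p : ℕ}

theorem natDegree_X_pow_sub_X_sub_C {R : Type*} [CommRing R] [Nontrivial R] (hp : 1 < p) (a : R) :
    (X ^ p - X - C a : R[X]).natDegree = p := by
  rw [sub_sub, natDegree_sub_eq_left_of_natDegree_lt] <;> rw [natDegree_X_pow]
  rwa [natDegree_X_add_C]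

theorem monic_X_pow_sub_X_sub_C {R : Type*} [CommRing R] [Nontrivial R] (hp : 1 < p) (a : R) :
    (X ^ p - X - C a : R[X]).Monic := by
  rw [sub_sub]
  exact monic_X_pow_sub (by rw [degree_X_add_C]; exact_mod_cast hp)

variable [Fact p.Prime]

theorem sub_mem_bot_of_isRoot_X_pow_sub_X_sub_C {E : Type*} [Field E] [CharP E p] {a r s : E}
    (hr : (X ^ p - X - C a).IsRoot r) (hs : (X ^ p - X - C a).IsRoot s) :
    r - s ∈ (⊥ : Subfield E) := by
  simp only [IsRoot, eval_sub, eval_pow, eval_X, eval_C] at hr hs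
  rw [Subfield.mem_bot_iff_pow_eq_self E p, sub_pow_char]
  linear_combination hr - hs

theorem irreducible_X_pow_sub_X_sub_C {F : Type*} [Field F] [CharP F p] {a : F}
    (ha : ∀ b : F, b ^ p - b ≠ a) : Irreducible (X ^ p - X - C a : F[X]) := by
  set f : F[X] := X ^ p - X - C a
  have hf : f.Monic := monic_X_pow_sub_X_sub_C (Fact.out : p.Prime).one_lt a
  have hdeg : f.natDegree = p := natDegree_X_pow_sub_X_sub_C (Fact.out : p.Prime).one_lt a
  obtain ⟨α, hα⟩ := IsAlgClosed.exists_aeval_eq_zero (AlgebraicClosure F) f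
    (by rw [degree_eq_natDegree hf.ne_zero, hdeg]; exact_mod_cast (Fact.out : p.Prime).ne_zero)
  have hint : IsIntegral F α := ⟨f, hf, hα⟩
  set g := minpoly F α
  have hgf : g ∣ f := minpoly.dvd F α hα
  suffices g.natDegree = p by
    rw [eq_of_monic_of_dvd_of_natDegree_le (minpoly.monic hint) hf hgf (by rw [this, hdeg])]
    exact minpoly.irreducible hint
  by_contra hgp
  have hdp : ¬ p ∣ g.natDegree := fun h ↦ hgp <|
    ((natDegree_le_of_dvd hgf hf.ne_zero).trans_eq hdeg).antisymm
      (Nat.le_of_dvd (minpoly.natDegree_pos hint) h)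
  let φ := algebraMap F (AlgebraicClosure F)
  have : CharP (AlgebraicClosure F) p := charP_of_injective_algebraMap φ.injective p
  have hroots : ∀ r ∈ (g.map φ).roots, r - α ∈ φ.fieldRange := by
    have hfα : (f.map φ).IsRoot α := by rwa [IsRoot, eval_map_algebraMap]
    intro r hr
    have hfr : (f.map φ).IsRoot r := (mem_roots (hf.map φ).ne_zero).mp
      (Multiset.mem_of_le (roots.le_of_dvd (hf.map φ).ne_zero (map_dvd φ hgf)) hr)
    simp only [f, Polynomial.map_sub, Polynomial.map_pow, map_X, map_C] at hfr hfα
    exact bot_le (a := φ.fieldRange) (sub_mem_bot_of_isRoot_X_pow_sub_X_sub_C hfr hfα)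
  obtain ⟨b, rfl⟩ : α ∈ φ.fieldRange := (IsAlgClosed.splits _).mem_of_forall_roots_sub_mem
    ((minpoly.monic hint).map φ) (by rw [nextCoeff_map φ.injective]; exact ⟨_, rfl⟩)
    (by rwa [natDegree_map, Ne, CharP.cast_eq_zero_iff _ p]) hroots
  refine ha b (φ.injective ?_)
  simpa [f, sub_eq_zero] using hα

end ArtinSchreier

end Polynomial

namespace LaurentSeries

theorem pow_sub_self_ne_single {R : Type*} [Ring R] [IsDomain R] {p : ℕ} (hp : 1 < p) {n : ℤ}
    (hn : n < 0) (hpn : ¬ (p : ℤ) ∣ n) {c : R} (hc : c ≠ 0) (x : LaurentSeries R) :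
    x ^ p - x ≠ HahnSeries.single n c := by
  intro h
  rcases eq_or_ne x 0 with rfl | hx
  · exact HahnSeries.single_ne_zero (a := n) hc
      (by simpa [zero_pow (by omega : p ≠ 0)] using h.symm)
  have hn' : (x ^ p - x).orderTop = n := by rw [h, HahnSeries.orderTop_single hc]
  have hx1 : x.orderTop = x.order := (HahnSeries.order_eq_orderTop_of_ne_zero hx).symm
  have hxp : (x ^ p).orderTop = (p * x.order : ℤ) := by
    rw [← HahnSeries.order_eq_orderTop_of_ne_zero (pow_ne_zero p hx), HahnSeries.order_pow,
      nsmul_eq_mul]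
  rcases lt_or_ge x.order 0 with hneg | hnonneg
  · have hlt : (x ^ p).orderTop < x.orderTop := by
      rw [hxp, hx1]
      exact_mod_cast (by nlinarith : (p : ℤ) * x.order < x.order)
    rw [HahnSeries.orderTop_sub hlt, hxp] at hn'
    exact hpn ⟨x.order, by exact_mod_cast hn'.symm⟩
  · have h0 : (0 : WithTop ℤ) ≤ (x ^ p - x).orderTop := by
      refine le_trans ?_ HahnSeries.min_orderTop_le_orderTop_sub
      rw [hxp, hx1, le_min_iff]
      exact ⟨by exact_mod_cast (by positivity : 0 ≤ (p : ℤ) * x.order),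
        by exact_mod_cast hnonneg⟩
    rw [hn'] at h0
    exact hn.not_ge (by exact_mod_cast h0)

end LaurentSeries

theorem stmt_5 (p : ℕ) (hp : p.Prime) (m : ℕ) (hm : 0 < m) (hpm : ¬ (p ∣ m)) :
    Irreducible ((X : Polynomial (LaurentSeries (ZMod p))) ^ p - X -
      C (HahnSeries.single (-(m : ℤ)) (1 : ZMod p))) := by
  have : Fact p.Prime := ⟨hp⟩
  have : CharP (LaurentSeries (ZMod p)) p :=
    charP_of_injective_algebraMap (algebraMap (ZMod p) _).injective p
  refine irreducible_X_pow_sub_X_sub_C fun b ↦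
    LaurentSeries.pow_sub_self_ne_single hp.one_lt (by omega) ?_ one_ne_zero b
  rwa [Int.dvd_neg, Int.natCast_dvd_natCast]
end

section
/- Let K = 𝔽_2((t)) be the field of formal Laurent series over the field with two elements (in Lean: LaurentSeries (ZMod 2)). The map ℘ : K → K, ℘(x) = x^2 - x (= x^2 + x in characteristic 2), is an additive group homomorphism, and the quotient additive group K/℘(K) is infinite. -/
/-!
If a Laurent series `x` has negative order `d`, then `x ^ p` dominates and `x ^ p - x` has order
`p * d`; otherwise `x ^ p - x` has nonnegative order. So every element of `℘(K)` of negative order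
has order divisible by `p`. The difference of two distinct monomials `t ^ (-(p * n + 1))` has
order `-(p * m + 1)` with `m` the larger index, so these monomials are pairwise distinct
modulo `℘(K)`.
-/

open HahnSeries

section ArtinSchreier

variable (R : Type*) [CommRing R] (p : ℕ) [ExpChar R p]

def artinSchreier : R →+ R :=
  (frobenius R p).toAddMonoidHom - AddMonoidHom.id R

variable {R p} in
@[simp]
theorem artinSchreier_apply (x : R) : artinSchreier R p x = x ^ p - x := rfl

end ArtinSchreier

namespace HahnSeries

variable {Γ R : Type*}

theorem order_eq_of_orderTop_eq [Zero Γ] [PartialOrder Γ] [Zero R] {x : R⟦Γ⟧} {g : Γ}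
    (h : x.orderTop = g) : x.order = g := by
  have hx : x ≠ 0 := orderTop_ne_top.mp (h ▸ WithTop.coe_ne_top)
  rw [← WithTop.coe_inj, order_eq_orderTop_of_ne_zero hx, h]

theorem order_single_sub_single_of_lt [Zero Γ] [LinearOrder Γ] [AddGroup R] {a b : Γ} (hab : a < b)
    {r : R} (hr : r ≠ 0) (s : R) : (single a r - single b s).order = a := by
  refine order_eq_of_orderTop_eq ?_
  rw [orderTop_sub (by rw [orderTop_single hr]; exact lt_orderTop_single hab), orderTop_single hr]

variable [AddCommMonoid Γ] [LinearOrder Γ] [IsOrderedCancelAddMonoid Γ]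

instance instCharP [NonAssocSemiring R] (p : ℕ) [CharP R p] : CharP R⟦Γ⟧ p :=
  charP_of_injective_ringHom C_injective p

variable [Ring R] {x : R⟦Γ⟧} {n : ℕ}

theorem order_pow_sub_self_of_order_neg [NoZeroDivisors R] (hx : x.order < 0) (hn : 2 ≤ n) :
    (x ^ n - x).order = n • x.order := by
  have hx0 : x ≠ 0 := by rintro rfl; simp at hx
  have hpow : n • x.order < x.order := by
    obtain ⟨k, rfl⟩ := Nat.exists_eq_add_of_le' hn
    rw [succ_nsmul]
    exact add_lt_of_neg_left _ (nsmul_neg hx k.succ_ne_zero)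
  have hlt : (x ^ n).orderTop < x.orderTop := by
    rwa [← order_eq_orderTop_of_ne_zero (pow_ne_zero n hx0), ← order_eq_orderTop_of_ne_zero hx0,
      order_pow, WithTop.coe_lt_coe]
  refine order_eq_of_orderTop_eq ?_
  rw [orderTop_sub hlt, ← order_eq_orderTop_of_ne_zero (pow_ne_zero n hx0), order_pow]

theorem order_pow_sub_self_nonneg (hx : 0 ≤ x.order) : 0 ≤ (x ^ n - x).order := by
  rw [← zero_le_orderTop_iff] at hx ⊢
  calc (0 : WithTop Γ) ≤ min (x ^ n).orderTop x.orderTop :=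
        le_min ((nsmul_nonneg hx n).trans orderTop_nsmul_le_orderTop_pow) hx
    _ ≤ (x ^ n - x).orderTop := min_orderTop_le_orderTop_sub

end HahnSeries

namespace LaurentSeries

variable {R : Type*} [CommRing R] [IsDomain R] {p : ℕ} [Fact p.Prime] [CharP R p]

theorem dvd_order_of_mem_range_artinSchreier {y : LaurentSeries R}
    (hy : y ∈ (artinSchreier (LaurentSeries R) p).range) (hneg : y.order < 0) :
    (p : ℤ) ∣ y.order := by
  obtain ⟨x, rfl⟩ := hy
  rw [artinSchreier_apply] at hneg ⊢
  by_cases hx : x.order < 0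
  · rw [order_pow_sub_self_of_order_neg hx (Fact.out : p.Prime).two_le, nsmul_eq_mul]
    exact dvd_mul_right _ _
  · exact absurd hneg (order_pow_sub_self_nonneg (not_lt.mp hx)).not_gt

variable (R p) in
theorem infinite_quotient_range_artinSchreier :
    Infinite (LaurentSeries R ⧸ (artinSchreier (LaurentSeries R) p).range) := by
  have hp : 1 < (p : ℤ) := mod_cast (Fact.out : p.Prime).one_lt
  set e : ℕ → ℤ := fun n ↦ -((p : ℤ) * n + 1)
  have he_anti : StrictAnti e := fun n m hnm ↦ by simp only [e]; gcongr
  have he_neg : ∀ n, e n < 0 := fun n ↦ neg_neg_of_pos (by positivity)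
  have he_not_dvd : ∀ n, ¬ (p : ℤ) ∣ e n := fun n h ↦ by
    rw [dvd_neg, Int.dvd_add_right (dvd_mul_right _ _)] at h
    exact absurd (Int.le_of_dvd one_pos h) hp.not_ge
  refine Infinite.of_injective (fun n ↦ QuotientAddGroup.mk (single (e n) (1 : R)))
    (Function.Injective.of_lt_imp_ne fun n m hnm h ↦ ?_)
  rw [eq_comm, QuotientAddGroup.eq_iff_sub_mem] at h
  have hord := order_single_sub_single_of_lt (he_anti hnm) one_ne_zero (1 : R)
  have hdvd := dvd_order_of_mem_range_artinSchreier h (hord.symm ▸ he_neg m)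
  exact he_not_dvd m (hord ▸ hdvd)

end LaurentSeries

theorem stmt_7 :
    ∃ ℘ : LaurentSeries (ZMod 2) →+ LaurentSeries (ZMod 2),
      (∀ x : LaurentSeries (ZMod 2), ℘ x = x ^ 2 - x) ∧
      Infinite (LaurentSeries (ZMod 2) ⧸ ℘.range) :=
  ⟨artinSchreier _ 2, artinSchreier_apply, LaurentSeries.infinite_quotient_range_artinSchreier _ 2⟩
end

section
/- Let K = 𝔽_2((t)) be the field of formal Laurent series over the field with two elements (in Lean: LaurentSeries (ZMod 2)). Let m and n be distinct odd positive integers. Then there is no f ∈ K with f^2 - f = t^{-m} + t^{-n}; that is, t^{-m} and t^{-n} lie in distinct classes of K/℘(K), where ℘(x) = x^2 - x. -/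
/-!
For a valuation `v`, either `v f ≥ 0`, and then `v (f ^ 2 - f) ≥ 0`, or `v f < 0`, and then the
square dominates and `v (f ^ 2 - f) = 2 v f`. So a negative value of `v (f ^ 2 - f)` is even,
whereas `t⁻ᵐ + t⁻ⁿ` has the negative odd valuation `-max m n`.
-/

namespace AddValuation

variable {R Γ : Type*} [Ring R] [AddCommGroup Γ] [LinearOrder Γ] [IsOrderedAddMonoid Γ]

theorem map_sq_sub_self_of_neg (v : AddValuation R (WithTop Γ)) {x : R}
    (h : v (x ^ 2 - x) < 0) : v (x ^ 2 - x) = v x + v x := by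
  have hsq : v (x ^ 2) = v x + v x := by rw [v.map_pow, two_nsmul]
  rcases lt_or_ge (v x) 0 with hneg | hnonneg
  · have hlt : v (x ^ 2) < v x := by
      rw [hsq]
      lift v x to Γ using hneg.ne_top with g
      norm_cast at hneg ⊢
      simpa using add_lt_add_right hneg g
    rw [v.map_sub_eq_of_lt_left hlt, hsq]
  · refine absurd h (not_lt.2 (v.map_le_sub ?_ hnonneg))
    rw [hsq]
    exact add_nonneg hnonneg hnonneg

end AddValuation

namespace HahnSeries

variable {Γ R : Type*} [AddCancelCommMonoid Γ] [LinearOrder Γ] [IsOrderedCancelAddMonoid Γ]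
  [Ring R] [IsDomain R]

theorem addVal_single_add_single {a b : Γ} (hab : a ≠ b) {r s : R} (hr : r ≠ 0)
    (hs : s ≠ 0) :
    addVal Γ R (single a r + single b s) = min (a : WithTop Γ) b := by
  have hva : addVal Γ R (single a r) = a := by
    rw [addVal_apply_of_ne (single_ne_zero hr), order_single hr]
  have hvb : addVal Γ R (single b s) = b := by
    rw [addVal_apply_of_ne (single_ne_zero hs), order_single hs]
  rw [AddValuation.map_add_of_distinct_val _ (by rwa [hva, hvb, Ne, WithTop.coe_eq_coe]), hva, hvb]

end HahnSeries

theorem stmt_8_general (m n : ℕ) (hmodd : Odd m) (hnodd : Odd n)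
    (hmn : m ≠ n) :
    ¬ ∃ f : LaurentSeries (ZMod 2),
      f ^ 2 - f = HahnSeries.single (-(m : ℤ)) (1 : ZMod 2) +
                  HahnSeries.single (-(n : ℤ)) (1 : ZMod 2) := by
  rintro ⟨f, hf⟩
  set v := HahnSeries.addVal ℤ (ZMod 2)
  have hval : v (f ^ 2 - f) = ((min (-(m : ℤ)) (-n) : ℤ) : WithTop ℤ) := by
    rw [hf, HahnSeries.addVal_single_add_single (by omega) one_ne_zero one_ne_zero, WithTop.coe_min]
  obtain ⟨a, rfl⟩ := hmodd
  obtain ⟨b, rfl⟩ := hnodd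
  have hsq := v.map_sq_sub_self_of_neg (x := f) (by rw [hval]; exact_mod_cast (by omega))
  rw [hval] at hsq
  cases hv : v f with
  | top => exact WithTop.coe_ne_top (by rw [hsq, hv, WithTop.top_add])
  | coe k =>
    rw [hv] at hsq
    norm_cast at hsq
    omega

theorem stmt_8 (m n : ℕ) (hm : 0 < m) (hn : 0 < n) (hmodd : Odd m) (hnodd : Odd n)
    (hmn : m ≠ n) :
    ¬ ∃ f : LaurentSeries (ZMod 2),
      f ^ 2 - f = HahnSeries.single (-(m : ℤ)) (1 : ZMod 2) +
                  HahnSeries.single (-(n : ℤ)) (1 : ZMod 2) :=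
  stmt_8_general m n hmodd hnodd hmn
end
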